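/- arXiv:1112.0510 — 4 statements merged into one kernel-verified Lean document; each statement's English description precedes it below -/
import Mathlib

section
/- Let (w_k)_{k≥0} be a weight sequence with w_0 > 0 and w_k > 0 for some k ≥ 1, and set d := span(w) and ω := sup{k : w_k > 0}. Then: (i) if Z(m,n) > 0, then d divides m and 0 ≤ m ≤ ωn; (ii) if ω < ∞, there exists a constant C (depending on w) such that whenever d | m and C ≤ m ≤ ωn − C, one has Z(m,n) > 0; (iii) if ω = ∞, then for every C' < ∞ there exists a constant C (depending on w and C') such that whenever d | m and C ≤ m ≤ C'n, one has Z(m,n) > 0. -/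
open Filter Topology
open scoped ENNReal Classical

noncomputable def omegaW (w : ℕ → ℝ) : ℝ≥0∞ :=
  sSup ((fun k : ℕ => (k : ℝ≥0∞)) '' {k : ℕ | 0 < w k})

noncomputable def spanW (w : ℕ → ℝ) : ℕ :=
  sSup {d : ℕ | ∀ k : ℕ, 1 ≤ k → 0 < w k → d ∣ k}

noncomputable def Zball (w : ℕ → ℝ) (m n : ℕ) : ℝ :=
  ∑ y ∈ Finset.Nat.antidiagonalTuple n m, ∏ i, w (y i)

/-!
A positive-weight allocation of `m` balls in `n` boxes is the same as a way of writing `m` as a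
sum of `n` elements of the support `S = {k | 0 < w k}`; since `0 ∈ S`, only the number of nonzero
parts matters. Necessity is then immediate. For sufficiency, every large multiple of `gcd S`
lies in the additive monoid generated by `S` (`Nat.exists_mem_closure_of_ge`). Writing
`m = t + q K` with `K ∈ S` and `N ≤ t < N + K`, the part `t` fits into `t` boxes and each copy of
`K` into one box, so `N + K + m / K` boxes suffice. Take `K = ω` when `ω < ∞`, and `K ≥ 2 C'`
when `ω = ∞`.
-/

section

variable {w : ℕ → ℝ}

lemma spanW_eq_setGcd (w : ℕ → ℝ) : spanW w = Nat.setGcd {k | 0 < w k} := by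
  have hset : {d : ℕ | ∀ k : ℕ, 1 ≤ k → 0 < w k → d ∣ k} = {d | d ∣ Nat.setGcd {k | 0 < w k}} := by
    ext d
    simp only [Set.mem_ofPred_eq, Nat.dvd_setGcd_iff]
    refine ⟨fun h k hk => ?_, fun h k _ hk => h k hk⟩
    rcases Nat.eq_zero_or_pos k with rfl | hk1
    · exact dvd_zero d
    · exact h k hk1 hk
  rw [spanW, hset]
  rcases Nat.eq_zero_or_pos (Nat.setGcd {k | 0 < w k}) with hg | hg
  · refine hg ▸ Nat.sSup_of_not_bddAbove fun ⟨b, hb⟩ => ?_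
    simpa using hb (show b + 1 ∈ _ from by simp)
  · exact IsGreatest.csSup_eq ⟨dvd_rfl, fun d hd => Nat.le_of_dvd hg hd⟩

lemma natCast_le_omegaW {k : ℕ} (hk : 0 < w k) : (k : ℝ≥0∞) ≤ omegaW w :=
  le_sSup ⟨k, hk, rfl⟩

lemma exists_natCast_eq_omegaW (hω : omegaW w ≠ ⊤) (h1 : ∃ k, 1 ≤ k ∧ 0 < w k) :
    ∃ Ω, 1 ≤ Ω ∧ 0 < w Ω ∧ omegaW w = Ω := by
  obtain ⟨B, hB⟩ := ENNReal.exists_nat_gt hω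
  have hbdd : BddAbove {k | 0 < w k} :=
    ⟨B, fun k hk => by exact_mod_cast ((natCast_le_omegaW hk).trans_lt hB).le⟩
  obtain ⟨k₀, hk₀, hwk₀⟩ := h1
  refine ⟨sSup {k | 0 < w k}, hk₀.trans (le_csSup hbdd hwk₀), Nat.sSup_mem ⟨k₀, hwk₀⟩ hbdd,
    le_antisymm (sSup_le ?_) (natCast_le_omegaW (Nat.sSup_mem ⟨k₀, hwk₀⟩ hbdd))⟩
  rintro _ ⟨k, hk, rfl⟩
  exact Nat.cast_le.mpr (le_csSup hbdd hk)

lemma exists_le_of_omegaW_eq_top (hω : omegaW w = ⊤) (B : ℕ) : ∃ k, B ≤ k ∧ 0 < w k := by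
  by_contra! h
  refine ENNReal.natCast_ne_top B (top_le_iff.mp (hω ▸ sSup_le ?_))
  rintro _ ⟨k, hk, rfl⟩
  exact Nat.cast_le.mpr (not_le.mp fun hBk => (h k hBk).not_gt hk).le

lemma zball_pos_iff (hw : ∀ k, 0 ≤ w k) {m n : ℕ} :
    0 < Zball w m n ↔ ∃ y : Fin n → ℕ, ∑ i, y i = m ∧ ∀ i, 0 < w (y i) := by
  have hprod : ∀ y : Fin n → ℕ, 0 < ∏ i, w (y i) ↔ ∀ i, 0 < w (y i) := fun y =>
    ⟨fun h i => (hw _).lt_of_ne fun h0 => h.ne' (Finset.prod_eq_zero (Finset.mem_univ i) h0.symm),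
      fun h => Finset.prod_pos fun i _ => h i⟩
  rw [Zball, Finset.sum_pos_iff_of_nonneg fun y _ => Finset.prod_nonneg fun i _ => hw _]
  simp only [Finset.Nat.mem_antidiagonalTuple, hprod]

lemma zball_pos_add (hw : ∀ k, 0 ≤ w k) {a b p q : ℕ} (ha : 0 < Zball w a p)
    (hb : 0 < Zball w b q) : 0 < Zball w (a + b) (p + q) := by
  obtain ⟨y, hy, hyw⟩ := (zball_pos_iff hw).mp ha
  obtain ⟨z, hz, hzw⟩ := (zball_pos_iff hw).mp hb
  refine (zball_pos_iff hw).mpr ⟨Fin.append y z, by rw [Fin.sum_univ_add]; simp [hy, hz], ?_⟩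
  exact Fin.addCases (by simpa using hyw) (by simpa using hzw)

lemma zball_mul_pos (hw : ∀ k, 0 ≤ w k) {k : ℕ} (hk : 0 < w k) (q : ℕ) : 0 < Zball w (k * q) q :=
  (zball_pos_iff hw).mpr ⟨fun _ => k, by simp [mul_comm], fun _ => hk⟩

lemma zball_pos_mono (hw : ∀ k, 0 ≤ w k) (h0 : 0 < w 0) {m n n' : ℕ} (h : 0 < Zball w m n)
    (hn : n ≤ n') : 0 < Zball w m n' := by
  simpa [Nat.add_sub_cancel' hn] using zball_pos_add hw h (zball_mul_pos hw h0 (n' - n))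

lemma zball_pos_of_mem_closure (hw : ∀ k, 0 ≤ w k) (h0 : 0 < w 0) {m n : ℕ}
    (hm : m ∈ AddSubmonoid.closure {k | 0 < w k}) (hn : m ≤ n) : 0 < Zball w m n := by
  induction hm using AddSubmonoid.closure_induction generalizing n with
  | mem k hk =>
    rcases Nat.eq_zero_or_pos k with rfl | hk1
    · simpa using zball_mul_pos hw h0 n
    · simpa using zball_pos_mono hw h0 (zball_mul_pos hw hk 1) (hk1.trans_le hn)
  | zero => simpa using zball_mul_pos hw h0 n
  | add a b _ _ iha ihb =>
    simpa [Nat.add_sub_cancel' (le_of_add_le_left hn)] using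
      zball_pos_add hw (iha le_rfl) (ihb (le_tsub_of_add_le_left hn))

lemma exists_zball_pos_of_spanW_dvd (hw : ∀ k, 0 ≤ w k) (h0 : 0 < w 0) :
    ∃ N, ∀ {K m n : ℕ}, 0 < K → 0 < w K → spanW w ∣ m → N ≤ m → N + K + m / K ≤ n →
      0 < Zball w m n := by
  obtain ⟨N, hN⟩ := Nat.exists_mem_closure_of_ge {k | 0 < w k}
  refine ⟨N, fun {K m n} hK hwK hm hNm hn => ?_⟩
  have hmt : m = (N + (m - N) % K) + K * ((m - N) / K) := by
    have := Nat.mod_add_div (m - N) K; omega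
  set q := (m - N) / K
  set t := N + (m - N) % K
  have hdK : spanW w ∣ K := spanW_eq_setGcd w ▸ Nat.setGcd_dvd_of_mem hwK
  have ht : t ∈ AddSubmonoid.closure {k | 0 < w k} :=
    hN t (Nat.le_add_right _ _)
      (spanW_eq_setGcd w ▸ (Nat.dvd_add_left (hdK.mul_right q)).mp (hmt ▸ hm))
  have hq : q ≤ m / K := Nat.div_le_div_right (Nat.sub_le m N)
  have hr : (m - N) % K < K := Nat.mod_lt _ hK
  rw [hmt]
  have hpos : 0 < Zball w (t + K * q) (t + q) :=
    zball_pos_add hw (zball_pos_of_mem_closure hw h0 ht le_rfl) (zball_mul_pos hw hwK q)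
  exact zball_pos_mono hw h0 hpos (by omega)

lemma spanW_dvd_of_zball_pos (hw : ∀ k, 0 ≤ w k) {m n : ℕ} (h : 0 < Zball w m n) :
    spanW w ∣ m := by
  obtain ⟨y, rfl, hy⟩ := (zball_pos_iff hw).mp h
  exact spanW_eq_setGcd w ▸ Finset.dvd_sum fun i _ => Nat.setGcd_dvd_of_mem (hy i)

lemma natCast_le_omegaW_mul_of_zball_pos (hw : ∀ k, 0 ≤ w k) {m n : ℕ} (h : 0 < Zball w m n) :
    (m : ℝ≥0∞) ≤ omegaW w * n := by
  obtain ⟨y, rfl, hy⟩ := (zball_pos_iff hw).mp h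
  calc ((∑ i, y i : ℕ) : ℝ≥0∞) = ∑ i, (y i : ℝ≥0∞) := Nat.cast_sum _ _
    _ ≤ ∑ _i : Fin n, omegaW w := Finset.sum_le_sum fun i _ => natCast_le_omegaW (hy i)
    _ = omegaW w * n := by simp [mul_comm]

lemma exists_zball_pos_of_omegaW_ne_top (hw : ∀ k, 0 ≤ w k) (h0 : 0 < w 0)
    (h1 : ∃ k, 1 ≤ k ∧ 0 < w k) (hω : omegaW w ≠ ⊤) :
    ∃ C : ℕ, ∀ m n : ℕ, spanW w ∣ m → C ≤ m → (m : ℝ≥0∞) + C ≤ omegaW w * n →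
      0 < Zball w m n := by
  obtain ⟨Ω, hΩ, hwΩ, hωΩ⟩ := exists_natCast_eq_omegaW hω h1
  obtain ⟨N, hN⟩ := exists_zball_pos_of_spanW_dvd hw h0
  refine ⟨Ω * (N + Ω), fun m n hm hCm hmn => hN hΩ hwΩ hm ?_ ?_⟩
  · exact (Nat.le_add_right N Ω).trans ((Nat.le_mul_of_pos_left _ hΩ).trans hCm)
  · have hmn' : m + Ω * (N + Ω) ≤ Ω * n := by rw [hωΩ] at hmn; exact_mod_cast hmn
    refine Nat.le_of_mul_le_mul_left ?_ hΩ
    calc Ω * (N + Ω + m / Ω) = Ω * (N + Ω) + Ω * (m / Ω) := by ring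
      _ ≤ Ω * (N + Ω) + m := Nat.add_le_add_left (Nat.mul_div_le m Ω) _
      _ ≤ Ω * n := by omega

lemma exists_zball_pos_of_omegaW_eq_top (hw : ∀ k, 0 ≤ w k) (h0 : 0 < w 0)
    (hω : omegaW w = ⊤) (C' : ℝ) :
    ∃ C : ℕ, ∀ m n : ℕ, spanW w ∣ m → C ≤ m → (m : ℝ) ≤ C' * n → 0 < Zball w m n := by
  obtain ⟨N, hN⟩ := exists_zball_pos_of_spanW_dvd hw h0
  obtain ⟨K, hK, hwK⟩ := exists_le_of_omegaW_eq_top hω (max 1 ⌈2 * C'⌉₊)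
  refine ⟨N + 1 + ⌈C' * (2 * (N + K))⌉₊, fun m n hm hCm hmn => hN (by omega) hwK hm (by omega) ?_⟩
  have hm1 : (1 : ℝ) ≤ m := by exact_mod_cast (show 1 ≤ m by omega)
  have hC' : 0 < C' := by
    by_contra! h
    nlinarith [mul_nonpos_of_nonpos_of_nonneg h (Nat.cast_nonneg (α := ℝ) n)]
  have hK' : 2 * C' ≤ K := (Nat.le_ceil _).trans (by exact_mod_cast le_of_max_le_right hK)
  have hNK : 2 * (N + K) ≤ n := by
    have : C' * (2 * (N + K)) ≤ C' * n := calc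
      C' * (2 * (N + K)) ≤ ⌈C' * (2 * (N + K))⌉₊ := Nat.le_ceil _
      _ ≤ m := by exact_mod_cast (show ⌈C' * (2 * (N + K))⌉₊ ≤ m by omega)
      _ ≤ C' * n := hmn
    exact_mod_cast le_of_mul_le_mul_left this hC'
  have hq : 2 * (m / K) ≤ n := by
    have hKq : (K : ℝ) * (m / K : ℕ) ≤ m := by exact_mod_cast Nat.mul_div_le m K
    have hK0 : (0 : ℝ) < K := by exact_mod_cast (show 0 < K by omega)
    have : (K : ℝ) * (2 * (m / K : ℕ)) ≤ K * n := by nlinarith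
    exact_mod_cast le_of_mul_le_mul_left this hK0
  omega

end

/-- Lemma 11.2 (existence of good allocations): (i) if `Z(m,n) > 0` then `span(w) ∣ m`
and `m ≤ ω n`; (ii) if `ω < ∞` there is a constant `C` such that `span(w) ∣ m` and
`C ≤ m ≤ ωn − C` imply `Z(m,n) > 0`; (iii) if `ω = ∞`, for every `C' < ∞` there is a
constant `C` such that `span(w) ∣ m` and `C ≤ m ≤ C'n` imply `Z(m,n) > 0`. -/
theorem balls_in_boxes_exists (w : ℕ → ℝ) (hw : ∀ k, 0 ≤ w k) (h0 : 0 < w 0)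
    (h1 : ∃ k, 1 ≤ k ∧ 0 < w k) :
    (∀ m n : ℕ, 0 < Zball w m n → spanW w ∣ m ∧ (m : ℝ≥0∞) ≤ omegaW w * n) ∧
    (omegaW w ≠ ⊤ → ∃ C : ℕ, ∀ m n : ℕ, spanW w ∣ m →
      C ≤ m → (m : ℝ≥0∞) + C ≤ omegaW w * n → 0 < Zball w m n) ∧
    (omegaW w = ⊤ → ∀ C' : ℝ, ∃ C : ℕ, ∀ m n : ℕ, spanW w ∣ m →
      C ≤ m → (m : ℝ) ≤ C' * n → 0 < Zball w m n) :=
  ⟨fun _ _ h => ⟨spanW_dvd_of_zball_pos hw h, natCast_le_omegaW_mul_of_zball_pos hw h⟩,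
    exists_zball_pos_of_omegaW_ne_top hw h0 h1, exists_zball_pos_of_omegaW_eq_top hw h0⟩
end

section
/- (Cycle lemma.) Let x_1, …, x_n be integers with x_i ≥ −1 for all i and ∑_{i=1}^n x_i = −r, where r ≥ 0. For j ∈ ℤ let (x^(j)_1,…,x^(j)_n) be the cyclic shift x^(j)_i := x_{i+j} (indices taken modulo n), with partial sums S^(j)_k := ∑_{i=1}^k x^(j)_i for 0 ≤ k ≤ n. Then there are exactly r values of j ∈ {1,…,n} such that S^(j)_k > −r for all 0 ≤ k < n. -/
/-!
Extend `x` periodically and let `S m` be the sum of its first `m` terms, so that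
`S (m + n) = S m - r`. The shift by `j < n` has all proper partial sums `> -r` exactly when
`n + j` is a strict record of the walk `S`. Since the walk moves down by at most one per step, its
strict records before time `N` are the first visits to the levels `0, -1, …, min S`, so there are
`1 - min S` of them. The minimum of `S` over `[0, 2n)` is `r` below its minimum over `[0, n)`,
hence exactly `r` strict records lie in `[n, 2n)`.
-/

open Finset
open scoped Classical

namespace CycleLemma

def IsStrictRecord (S : ℕ → ℤ) (t : ℕ) : Prop := ∀ m < t, S t < S m

theorem count_isStrictRecord {S : ℕ → ℤ} (hS₀ : S 0 = 0) (hstep : ∀ m, S m - 1 ≤ S (m + 1))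
    (N : ℕ) (hN : (range N).Nonempty) :
    (Nat.count (IsStrictRecord S) N : ℤ) = 1 - (range N).inf' hN S := by
  induction N with
  | zero => simp at hN
  | succ N ih =>
    rcases N.eq_zero_or_pos with rfl | hpos
    · simp [Nat.count_succ, IsStrictRecord, hS₀]
    have hN' : (range N).Nonempty := nonempty_range_iff.2 hpos.ne'
    have hmin_le : (range N).inf' hN' S ≤ S (N - 1) := inf'_le _ (by simp [hpos])
    have hprev := hstep (N - 1)
    rw [Nat.sub_add_cancel hpos] at hprev
    simp only [Nat.count_succ, range_add_one, inf'_insert hN']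
    by_cases hrec : IsStrictRecord S N
    · have hlt : S N < (range N).inf' hN' S :=
        (lt_inf'_iff hN').2 fun m hm => hrec m (mem_range.1 hm)
      rw [if_pos hrec, min_eq_left hlt.le]
      push_cast
      linarith [ih hN']
    · obtain ⟨m, hm, hSm⟩ : ∃ m < N, S m ≤ S N := by simpa [IsStrictRecord] using hrec
      rw [if_neg hrec, add_zero, ih hN', min_eq_right ((inf'_le S (mem_range.2 hm)).trans hSm)]

section Quasiperiodic

variable {S : ℕ → ℤ} {n r : ℕ} (hper : ∀ m, S (m + n) = S m - r)
include hper

theorem isStrictRecord_add_period_iff {j : ℕ} (hj : j ≤ n) :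
    IsStrictRecord S (j + n) ↔ ∀ k < n, S (j + n) < S (j + k) := by
  refine ⟨fun h k hk => h _ (by omega), fun h m hm => ?_⟩
  rcases le_or_gt j m with hjm | hmj
  · simpa [Nat.add_sub_cancel' hjm] using h (m - j) (by omega)
  · have := h (m + n - j) (by omega)
    rw [Nat.add_sub_cancel' (by omega), hper m] at this
    omega

theorem inf'_range_add_period (hn : (range n).Nonempty) (hnn : (range (n + n)).Nonempty) :
    (range (n + n)).inf' hnn S = (range n).inf' hn S - r := by
  obtain ⟨m₀, hm₀, hmin⟩ := exists_mem_eq_inf' hn S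
  refine le_antisymm ?_ (le_inf' _ _ fun m hm => ?_)
  · rw [hmin, ← hper]
    exact inf'_le _ (by simp at hm₀ ⊢; omega)
  · rcases lt_or_ge m n with hmn | hnm
    · linarith [inf'_le S (mem_range.2 hmn)]
    · obtain ⟨k, rfl⟩ := Nat.exists_eq_add_of_le' hnm
      rw [hper]
      linarith [inf'_le S (show k ∈ range n by simp at hm ⊢; omega)]

end Quasiperiodic

theorem sum_range_add_period {M : Type*} [AddCommMonoid M] {f : ℕ → M} {n : ℕ}
    (hf : Function.Periodic f n) (m : ℕ) :
    ∑ i ∈ range (m + n), f i = ∑ i ∈ range m, f i + ∑ i ∈ range n, f i := by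
  rw [add_comm m, sum_range_add, add_comm]
  exact congrArg (· + _) (sum_congr rfl fun i _ => by rw [add_comm, hf])

end CycleLemma

open CycleLemma in
/-- The cycle lemma (Lemma 15.3 of Janson; Dvoretzky–Motzkin): if `x_1, …, x_n ≥ −1`
are integers with sum `−r ≤ 0`, then exactly `r` of the `n` cyclic shifts of
`(x_1,…,x_n)` have all proper partial sums `> −r`. -/
theorem cycle_lemma (n : ℕ) (hn : 0 < n) (x : Fin n → ℤ) (r : ℕ)
    (hge : ∀ i, -1 ≤ x i) (hsum : ∑ i, x i = -(r : ℤ)) :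
    ((Finset.range n).filter fun j =>
        ∀ k, k < n →
          -(r : ℤ) < ∑ i ∈ Finset.range k, x ⟨(i + j) % n, Nat.mod_lt _ hn⟩).card = r := by
  set f : ℕ → ℤ := fun i => x ⟨i % n, Nat.mod_lt _ hn⟩
  set S : ℕ → ℤ := fun m => ∑ i ∈ range m, f i
  have hf : Function.Periodic f n := fun i => by simp [f]
  have hfn : ∑ i ∈ range n, f i = -r := by
    rw [← hsum, ← Fin.sum_univ_eq_sum_range]
    simp [f, Nat.mod_eq_of_lt]
  have hper : ∀ m, S (m + n) = S m - r := fun m => by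
    simp only [S]; rw [sum_range_add_period hf, hfn]; ring
  have hstep : ∀ m, S m - 1 ≤ S (m + 1) := fun m => by
    simp only [S, sum_range_succ]; linarith [hge ⟨m % n, Nat.mod_lt _ hn⟩]
  have hgood : ∀ j ∈ range n, (∀ k, k < n → -(r : ℤ) < ∑ i ∈ range k, f (i + j)) ↔
      IsStrictRecord S (n + j) := fun j hj => by
    rw [add_comm, isStrictRecord_add_period_iff hper (mem_range.1 hj).le, hper]
    simp only [S, ← sum_range_add_sub_sum_range, add_comm _ j]
    exact forall₂_congr fun k _ => by constructor <;> intro h <;> linarith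
  have hn₁ : (range n).Nonempty := nonempty_range_iff.2 hn.ne'
  have hn₂ : (range (n + n)).Nonempty := nonempty_range_iff.2 (by omega)
  have hcount₁ := count_isStrictRecord (S := S) rfl hstep n hn₁
  have hcount₂ := count_isStrictRecord (S := S) rfl hstep (n + n) hn₂
  rw [inf'_range_add_period hper hn₁ hn₂, Nat.count_add] at hcount₂
  rw [filter_congr hgood, ← Nat.count_eq_card_filter_range]
  omega
end

section
/- Let d_1, …, d_n ∈ ℕ with ∑_{i=1}^n d_i = n − 1. Then exactly one of the n cyclic shifts (d_{1+j}, …, d_{n+j}) (indices taken modulo n, j ∈ {1,…,n}) satisfies ∑_{i=1}^k d_{i+j} ≥ k for all 1 ≤ k < n; that is, exactly one cyclic shift is the depth-first degree sequence of an ordered rooted tree with n nodes. -/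
open Filter Topology
open scoped Classical

/-- Corollary 15.4 of Janson: if `d_1, …, d_n ∈ ℕ` with `∑ d_i = n − 1`, then exactly
one of the `n` cyclic shifts of `(d_1,…,d_n)` satisfies `∑_{i=1}^k d_i ≥ k` for all
`1 ≤ k < n`, i.e. exactly one cyclic shift is the depth-first degree sequence of an
ordered rooted tree with `n` nodes. -/
theorem unique_cyclic_shift_tree (n : ℕ) (hn : 0 < n) (d : Fin n → ℕ)
    (hsum : ∑ i, d i = n - 1) :
    ∃! j : Fin n, ∀ k, 1 ≤ k → k < n →
      k ≤ ∑ i ∈ Finset.range k, d ⟨(i + (j : ℕ)) % n, Nat.mod_lt _ hn⟩ := by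
  haveI : NeZero n := ⟨hn.ne'⟩
  set S : ℕ → ℕ := fun m => ∑ i ∈ Finset.range m, d ⟨i % n, Nat.mod_lt _ hn⟩ with hSdef
  have hSsucc : ∀ m : ℕ, S (m + 1) = S m + d ⟨m % n, Nat.mod_lt _ hn⟩ := by
    intro m; rw [hSdef]; exact Finset.sum_range_succ _ m
  have hT : ∀ j k : ℕ,
      S j + (∑ i ∈ Finset.range k, d ⟨(i + j) % n, Nat.mod_lt _ hn⟩) = S (j + k) := by
    intro j k
    induction k with
    | zero => simp
    | succ k ih =>
      rw [Finset.sum_range_succ, ← add_assoc, ih]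
      have h1 : j + (k + 1) = (j + k) + 1 := by ring
      rw [h1, hSsucc]
      have hfin : (⟨(k + j) % n, Nat.mod_lt _ hn⟩ : Fin n)
          = ⟨(j + k) % n, Nat.mod_lt _ hn⟩ := by
        apply Fin.ext; simp [Nat.add_comm]
      rw [hfin]
  -- period: S (m + n) = S m + (n - 1)
  have hper : ∀ m : ℕ, S (m + n) = S m + (n - 1) := by
    intro m
    have h1 := hT m n
    have h2 : (∑ i ∈ Finset.range n, d ⟨(i + m) % n, Nat.mod_lt _ hn⟩) = n - 1 := by
      rw [← hsum, ← Fin.sum_univ_eq_sum_range (fun i => d ⟨(i + m) % n, Nat.mod_lt _ hn⟩)]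
      have key : ∀ i : Fin n, d ⟨((i : ℕ) + m) % n, Nat.mod_lt _ hn⟩
          = d (i + (⟨m % n, Nat.mod_lt _ hn⟩ : Fin n)) := by
        intro i
        congr 1
        apply Fin.ext
        simp only [Fin.add_def]
        show ((i : ℕ) + m) % n = ((i : ℕ) + m % n) % n
        conv_lhs => rw [Nat.add_mod]
        conv_rhs => rw [Nat.add_mod, Nat.mod_mod_of_dvd m (dvd_refl n)]
      rw [Finset.sum_congr rfl (fun i _ => key i)]
      exact Equiv.sum_comp (Equiv.addRight (⟨m % n, Nat.mod_lt _ hn⟩ : Fin n)) d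
    omega
  -- the walk
  set g : ℕ → ℤ := fun m => (S m : ℤ) - m with hgdef
  have hgper : ∀ m : ℕ, g (m + n) = g m - 1 := by
    intro m
    simp only [hgdef]
    have := hper m
    omega
  -- condition equivalence
  have hiff : ∀ j k : ℕ,
      (k ≤ ∑ i ∈ Finset.range k, d ⟨(i + j) % n, Nat.mod_lt _ hn⟩) ↔ g j ≤ g (j + k) := by
    intro j k
    have h := hT j k
    simp only [hgdef]
    omega
  -- first minimizer of g on [0, n)
  have hex : ∃ m : ℕ, m < n ∧ ∀ m' : ℕ, m' < n → g m ≤ g m' := by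
    obtain ⟨m, hm, hmin⟩ := Finset.exists_min_image (Finset.range n) g
      ⟨0, Finset.mem_range.mpr hn⟩
    exact ⟨m, Finset.mem_range.mp hm, fun m' hm' => hmin m' (Finset.mem_range.mpr hm')⟩
  set j : ℕ := Nat.find hex with hjdef
  obtain ⟨hjn, hjmin⟩ := Nat.find_spec hex
  have hfirst : ∀ m : ℕ, m < j → g j < g m := by
    intro m hm
    have hnot := Nat.find_min hex hm
    push_neg at hnot
    have hmn : m < n := lt_trans hm hjn
    obtain ⟨m', hm'n, hm'⟩ := hnot hmn
    exact lt_of_le_of_lt (hjmin m' hm'n) hm'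
  -- j satisfies the condition
  have hgood : ∀ k, 1 ≤ k → k < n → g j ≤ g (j + k) := by
    intro k hk1 hk2
    by_cases hjk : j + k < n
    · exact hjmin _ hjk
    · have hm : j + k = (j + k - n) + n := by omega
      rw [hm, hgper]
      have h1 : j + k - n < j := by omega
      have := hfirst _ h1
      omega
  -- uniqueness at the level of naturals
  have huniq : ∀ j' : ℕ, j' < n → (∀ k, 1 ≤ k → k < n → g j' ≤ g (j' + k)) →
      ∀ j'' : ℕ, j'' < n → (∀ k, 1 ≤ k → k < n → g j'' ≤ g (j'' + k)) → j' = j'' := by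
    intro j1 hj1 h1 j2 hj2 h2
    by_contra hne
    -- wlog j1 < j2
    rcases Nat.lt_or_ge j1 j2 with hlt | hge
    · have ha := h1 (j2 - j1) (by omega) (by omega)
      have hb := h2 (n - (j2 - j1)) (by omega) (by omega)
      have heq1 : j1 + (j2 - j1) = j2 := by omega
      have heq2 : j2 + (n - (j2 - j1)) = j1 + n := by omega
      rw [heq1] at ha
      rw [heq2, hgper] at hb
      omega
    · have hlt : j2 < j1 := by omega
      have ha := h2 (j1 - j2) (by omega) (by omega)
      have hb := h1 (n - (j1 - j2)) (by omega) (by omega)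
      have heq1 : j2 + (j1 - j2) = j1 := by omega
      have heq2 : j1 + (n - (j1 - j2)) = j2 + n := by omega
      rw [heq1] at ha
      rw [heq2, hgper] at hb
      omega
  refine ⟨⟨j, hjn⟩, ?_, ?_⟩
  · intro k hk1 hk2
    have : ((⟨j, hjn⟩ : Fin n) : ℕ) = j := rfl
    rw [this, hiff]
    exact hgood k hk1 hk2
  · intro j' hj'
    apply Fin.ext
    refine huniq (j' : ℕ) j'.isLt ?_ j hjn hgood
    intro k hk1 hk2
    rw [← hiff]
    exact hj' k hk1 hk2
end

section
/- Let (w_k)_{k≥0} be a weight sequence with w_0 > 0 and ω := sup{k : w_k > 0} satisfying 1 ≤ ω < ∞. Suppose n → ∞ and m = m(n) with m/n → λ > 0. Then for every fixed j ≥ 1, with probability tending to 1 at least j of the coordinates of B_{m(n),n} equal ω; that is, P(#{1 ≤ i ≤ n : Y_i = ω} ≥ j) → 1 as n → ∞. In particular the j-th largest value among Y_1,…,Y_n equals ω with probability tending to 1. -/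
open Filter Topology
open scoped ENNReal Classical

/-- Generating function `Φ(t) = ∑ w_k t^k` of a weight sequence, with values in `[0,∞]`. -/
noncomputable def PhiE (w : ℕ → ℝ) (t : ℝ) : ℝ≥0∞ :=
  ∑' k : ℕ, ENNReal.ofReal (w k * t ^ k)

/-- Radius of convergence `ρ ∈ [0,∞]` of the generating function of a weight sequence. -/
noncomputable def rhoW (w : ℕ → ℝ) : ℝ≥0∞ :=
  sSup {r : ℝ≥0∞ | ∃ t : ℝ, 0 ≤ t ∧ r = ENNReal.ofReal t ∧
    Summable (fun k : ℕ => w k * t ^ k)}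

/-- `Ψ(t) = t Φ'(t)/Φ(t) = (∑ k w_k t^k)/(∑ w_k t^k)`, with values in `[0,∞]`. -/
noncomputable def PsiE (w : ℕ → ℝ) (t : ℝ) : ℝ≥0∞ :=
  (∑' k : ℕ, ENNReal.ofReal ((k : ℝ) * w k * t ^ k)) / PhiE w t

/-- `ν := lim_{t↑ρ} Ψ(t) ∈ [0,∞]` (`= 0` if `ρ = 0`); since `Ψ` is increasing on `[0,ρ)`
this limit equals the supremum of `Ψ` over `[0,ρ)`. -/
noncomputable def nuW (w : ℕ → ℝ) : ℝ≥0∞ :=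
  sSup {x : ℝ≥0∞ | ∃ t : ℝ, 0 ≤ t ∧ ENNReal.ofReal t < rhoW w ∧ x = PsiE w t}

/-- `τ(λ) ∈ [0,ρ]`: the unique `t ∈ [0,ρ]` with `Ψ(t) = λ` when `λ ≤ ν`, and `τ := ρ`
when `λ > ν`.  Since `Ψ` is continuous and strictly increasing on `[0,ρ)`, this equals
`sup {t < ρ : Ψ(t) ≤ λ}`. -/
noncomputable def tauW (w : ℕ → ℝ) (lam : ℝ≥0∞) : ℝ≥0∞ :=
  sSup {r : ℝ≥0∞ | ∃ t : ℝ, 0 ≤ t ∧ r = ENNReal.ofReal t ∧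
    ENNReal.ofReal t < rhoW w ∧ PsiE w t ≤ lam}

/-- `P(B_{m,n} ∈ A)`: the probability that the random allocation `B_{m,n}` (taking each
allocation `y` with probability `w(y)/Z(m,n)`) lies in the set `A`. -/
noncomputable def ballsProb (w : ℕ → ℝ) (m n : ℕ) (A : Set (Fin n → ℕ)) : ℝ :=
  (∑ y ∈ (Finset.Nat.antidiagonalTuple n m).filter (fun y => y ∈ A), ∏ i, w (y i)) /
    Zball w m n

/-- The probability weight sequence `π_k := w_k τ(λ)^k / Φ(τ(λ))`. -/
noncomputable def piW (w : ℕ → ℝ) (lam : ℝ) (k : ℕ) : ℝ :=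
  w k * (tauW w (ENNReal.ofReal lam)).toReal ^ k /
    (PhiE w (tauW w (ENNReal.ofReal lam)).toReal).toReal

/-- `N_k(y)`: the number of boxes of an allocation `y` containing exactly `k` balls. -/
def boxCount {n : ℕ} (y : Fin n → ℕ) (k : ℕ) : ℕ :=
  (Finset.univ.filter fun i => y i = k).card

/-!
Call an allocation *bad* if fewer than `j` of its boxes hold `N = ω` balls. A bad allocation of
positive weight has all loads in `[0, N]`, so some load `a ∈ [1, N)` occurs in at least
`m / N² - j` boxes. Choosing `N` such boxes and refilling them as `a` boxes with `N` balls and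
`N - a` empty ones (a *switch*) keeps the number of balls and divides the weight by at most
`R = ∑_{1 ≤ a < N} w_a ^ N / (w_N ^ a w_0 ^ (N - a))`. A bad allocation admits at least
`C(m / N² - j, N) ≍ n ^ N` switches, while any allocation is the result of at most
`(j + N) C(n, N - 1) ≍ n ^ (N - 1)` switches of bad allocations: the switched boxes are those where
the two allocations differ, and they consist of a box with `N` balls in the result (of which there
are fewer than `j + N`) and `N - 1` others. Double counting gives `P(bad) = O(1 / n)`.
-/

open Finset

section DoubleCounting

variable {R α β : Type*} [CommSemiring R] [PartialOrder R] [IsOrderedRing R]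

theorem Finset.mul_sum_le_mul_mul_sum_of_bipartite (r : α → β → Prop)
    [∀ a b, Decidable (r a b)]
    {s : Finset α} {t : Finset β} {f : α → R} {g : β → R} {M K C : R}
    (hf : ∀ a ∈ s, 0 ≤ f a) (hg : ∀ b ∈ t, 0 ≤ g b) (hC : 0 ≤ C)
    (hM : ∀ a ∈ s, M ≤ #(t.bipartiteAbove r a)) (hK : ∀ b ∈ t, #(s.bipartiteBelow r b) ≤ K)
    (hfg : ∀ a ∈ s, ∀ b ∈ t, r a b → f a ≤ C * g b) :
    M * ∑ a ∈ s, f a ≤ C * K * ∑ b ∈ t, g b :=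
  calc M * ∑ a ∈ s, f a
      ≤ ∑ a ∈ s, ∑ _b ∈ t.bipartiteAbove r a, f a := by
        rw [mul_sum]
        gcongr with a ha
        rw [sum_const, nsmul_eq_mul]
        exact mul_le_mul_of_nonneg_right (hM a ha) (hf a ha)
    _ ≤ ∑ a ∈ s, ∑ b ∈ t.bipartiteAbove r a, C * g b := by
        gcongr with a ha b hb
        exact hfg a ha b (mem_bipartiteAbove r |>.1 hb).1 (mem_bipartiteAbove r |>.1 hb).2
    _ = ∑ b ∈ t, #(s.bipartiteBelow r b) * (C * g b) := by
        rw [sum_sum_bipartiteAbove_eq_sum_sum_bipartiteBelow]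
        simp only [sum_const, nsmul_eq_mul]
    _ ≤ ∑ b ∈ t, K * (C * g b) := by
        gcongr with b hb
        · exact mul_nonneg hC (hg b hb)
        · exact hK b hb
    _ = C * K * ∑ b ∈ t, g b := by
        rw [mul_sum]; exact sum_congr rfl fun _ _ => by ring

end DoubleCounting

section Switch

variable {ι : Type*} [DecidableEq ι] {N a : ℕ} {y y' : ι → ℕ} {s t : Finset ι}

def switch (N : ℕ) (y : ι → ℕ) (s t : Finset ι) : ι → ℕ :=
  fun i => if i ∈ t then N else if i ∈ s then 0 else y i

theorem filter_switch_eq (hN : N ≠ 0) (hts : t ⊆ s) :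
    ({i ∈ s | switch N y s t i = N} : Finset ι) = t := by
  ext i
  rw [Finset.mem_filter]
  simp only [switch]
  split_ifs with hit his
  · simp [hit, hts hit]
  · simp [hit, his, Ne.symm hN]
  · simp [hit, his]

variable [Fintype ι]

@[to_additive]
theorem prod_switch {M : Type*} [CommMonoid M] (f : ℕ → M) (hts : t ⊆ s) :
    ∏ i, f (switch N y s t i) = (∏ i ∈ sᶜ, f (y i)) * f N ^ #t * f 0 ^ (#s - #t) := by
  have hout : ∏ i ∈ sᶜ, f (switch N y s t i) = ∏ i ∈ sᶜ, f (y i) :=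
    prod_congr rfl fun i hi => by
      have hi : i ∉ s := mem_compl.1 hi
      have hit : i ∉ t := fun h => hi (hts h)
      simp [switch, hi, hit]
  have hin : ∏ i ∈ s, f (switch N y s t i) = f 0 ^ (#s - #t) * f N ^ #t := by
    rw [← prod_sdiff hts, ← card_sdiff_of_subset hts]
    congr 1
    · exact prod_eq_pow_card fun i hi => by simp [switch, Finset.mem_sdiff.1 hi]
    · exact prod_eq_pow_card fun i hi => by simp [switch, hi]
  rw [← prod_mul_prod_compl s, hin, hout]
  ac_rfl

@[to_additive]
theorem prod_eq_prod_compl_mul_pow {M : Type*} [CommMonoid M] (f : ℕ → M)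
    (hy : ∀ i ∈ s, y i = a) :
    ∏ i, f (y i) = (∏ i ∈ sᶜ, f (y i)) * f a ^ #s := by
  rw [← prod_mul_prod_compl s, mul_comm]
  exact congrArg _ (prod_eq_pow_card fun i hi => by rw [hy i hi])

def IsSwitch (N : ℕ) (y y' : ι → ℕ) : Prop :=
  ∃ a ∈ Ico 1 N, ∃ s t : Finset ι, t ⊆ s ∧ #s = N ∧ #t = a ∧ (∀ i ∈ s, y i = a) ∧
    y' = switch N y s t

theorem IsSwitch.sum_eq (h : IsSwitch N y y') : ∑ i, y' i = ∑ i, y i := by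
  obtain ⟨a, -, s, t, hts, hs, ht, hy, rfl⟩ := h
  have h₁ := sum_switch (N := N) (y := y) id hts
  have h₂ := sum_eq_sum_compl_add_nsmul (s := s) id hy
  simp only [id] at h₁ h₂
  rw [h₁, h₂, hs, ht]
  simp [mul_comm]

noncomputable def switchRatio (w : ℕ → ℝ) (N : ℕ) : ℝ :=
  ∑ a ∈ Ico 1 N, w a ^ N / (w N ^ a * w 0 ^ (N - a))

theorem switchRatio_nonneg {w : ℕ → ℝ} (hw : ∀ k, 0 ≤ w k) (N : ℕ) : 0 ≤ switchRatio w N :=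
  sum_nonneg fun _ _ => div_nonneg (pow_nonneg (hw _) _)
    (mul_nonneg (pow_nonneg (hw _) _) (pow_nonneg (hw _) _))

theorem IsSwitch.prod_le {w : ℕ → ℝ} (hw : ∀ k, 0 ≤ w k) (h0 : 0 < w 0) (hN : 0 < w N)
    (h : IsSwitch N y y') : ∏ i, w (y i) ≤ switchRatio w N * ∏ i, w (y' i) := by
  obtain ⟨a, ha, s, t, hts, hs, ht, hy, rfl⟩ := h
  have hd : 0 < w N ^ a * w 0 ^ (N - a) := by positivity
  have hswap : ∏ i, w (y i) =
      w a ^ N / (w N ^ a * w 0 ^ (N - a)) * ∏ i, w (switch N y s t i) := by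
    rw [div_mul_eq_mul_div, eq_div_iff hd.ne', prod_switch w hts,
      prod_eq_prod_compl_mul_pow w hy, hs, ht]
    ring
  rw [hswap]
  refine mul_le_mul_of_nonneg_right ?_ (prod_nonneg fun i _ => hw _)
  exact single_le_sum (f := fun a => w a ^ N / (w N ^ a * w 0 ^ (N - a)))
    (fun b _ => div_nonneg (pow_nonneg (hw _) _)
      (mul_nonneg (pow_nonneg (hw _) _) (pow_nonneg (hw _) _))) ha

theorem filter_ne_switch (ha : a ∈ Ico 1 N) (hts : t ⊆ s) (hy : ∀ i ∈ s, y i = a) :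
    ({i | y i ≠ switch N y s t i} : Finset ι) = s := by
  obtain ⟨ha₁, haN⟩ := mem_Ico.1 ha
  ext i
  rw [Finset.mem_filter, and_iff_right (mem_univ i)]
  simp only [switch]
  split_ifs with hit his
  · simpa [hy i (hts hit), haN.ne] using hts hit
  · simpa [hy i his, Nat.pos_iff_ne_zero.1 ha₁] using his
  · simpa using his

theorem IsSwitch.injOn_filter_ne (y' : ι → ℕ) :
    Set.InjOn (fun y => ({i | y i ≠ y' i} : Finset ι)) {y | IsSwitch N y y'} := by
  suffices key : ∀ y, IsSwitch N y y' → ∀ i, y i =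
      if i ∈ ({i | y i ≠ y' i} : Finset ι) then #{j ∈ {i | y i ≠ y' i} | y' j = N} else y' i by
    intro y₁ h₁ y₂ h₂ h
    funext i
    rw [key y₁ h₁ i, key y₂ h₂ i]
    simp only at h
    rw [h]
  rintro y ⟨a, ha, s, t, hts, hs, ht, hy, rfl⟩ i
  rw [filter_ne_switch ha hts hy, filter_switch_eq (by have := mem_Ico.1 ha; omega) hts, ht]
  split_ifs with his
  · exact hy i his
  · have hit : i ∉ t := fun h => his (hts h)
    simp [switch, his, hit]

end Switch

section Allocations

variable {n N a j : ℕ} {y y' : Fin n → ℕ}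

theorem IsSwitch.boxCount_lt (h : IsSwitch N y y') : boxCount y' N < boxCount y N + N := by
  obtain ⟨a, ha, s, t, hts, hs, ht, hy, rfl⟩ := h
  have haN := (mem_Ico.1 ha).2
  have hsub : ({i | switch N y s t i = N} : Finset (Fin n)) ⊆
      ({i | y i = N} : Finset (Fin n)) ∪ t := by
    intro i hi
    rw [Finset.mem_filter] at hi
    rw [Finset.mem_union, Finset.mem_filter]
    by_cases hit : i ∈ t
    · exact Or.inr hit
    · by_cases his : i ∈ s
      · simp [switch, hit, his] at hi; omega
      · simpa [switch, hit, his] using hi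
  calc boxCount (switch N y s t) N ≤ boxCount y N + #t :=
        (card_le_card hsub).trans (card_union_le _ _)
    _ < boxCount y N + N := by omega

theorem sum_le_mul_card_add_boxCount (hy : ∀ i, y i ≤ N) :
    ∑ i, y i ≤ N * (#{i | y i ∈ Ico 1 N} + boxCount y N) := by
  have hsub : ({i | y i ≠ 0} : Finset (Fin n)) ⊆
      ({i | y i ∈ Ico 1 N} : Finset (Fin n)) ∪ ({i | y i = N} : Finset (Fin n)) := by
    intro i hi
    simp only [Finset.mem_filter, Finset.mem_univ, true_and, Finset.mem_union, mem_Ico] at hi ⊢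
    have := hy i
    omega
  calc ∑ i, y i = ∑ i with y i ≠ 0, y i := (sum_filter_ne_zero _).symm
    _ ≤ #{i | y i ≠ 0} • N := sum_le_card_nsmul _ _ _ fun i _ => hy i
    _ ≤ N * (#{i | y i ∈ Ico 1 N} + boxCount y N) := by
        rw [smul_eq_mul, mul_comm]
        exact Nat.mul_le_mul_left N ((card_le_card hsub).trans (card_union_le _ _))

theorem exists_le_card_load (hy : ∀ i, y i ≤ N) (hj : boxCount y N < j)
    (hpos : 0 < (∑ i, y i) / (N * N) - j) :
    ∃ a ∈ Ico 1 N, (∑ i, y i) / (N * N) - j ≤ #{i | y i = a} := by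
  set c := (∑ i, y i) / (N * N) - j
  have hN : N ≠ 0 := by rintro rfl; simp [c] at hpos
  have hmid : #(Ico 1 N) * (c - 1) < #{i | y i ∈ Ico 1 N} := by
    by_contra! hle
    rw [Nat.card_Ico] at hle
    have hc : (N - 1) * (c - 1) ≤ N * c := Nat.mul_le_mul (Nat.sub_le _ _) (Nat.sub_le _ _)
    have hNj : j ≤ N * j := Nat.le_mul_of_pos_left j (Nat.pos_of_ne_zero hN)
    have : ∑ i, y i < (c + j) * (N * N) :=
      calc ∑ i, y i ≤ N * ((N - 1) * (c - 1) + (j - 1)) :=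
            (sum_le_mul_card_add_boxCount hy).trans (by gcongr; omega)
        _ < N * (N * c + N * j) := (Nat.mul_lt_mul_left (Nat.pos_of_ne_zero hN)).2 (by omega)
        _ = (c + j) * (N * N) := by ring
    have := (Nat.div_lt_iff_lt_mul (by positivity)).2 this
    omega
  obtain ⟨a, ha, hlt⟩ := exists_lt_card_fiber_of_mul_lt_card_of_maps_to
    (f := y) (fun i hi => (Finset.mem_filter.1 hi).2) hmid
  have hsub : ({i ∈ {i | y i ∈ Ico 1 N} | y i = a} : Finset (Fin n)) ⊆
      ({i | y i = a} : Finset (Fin n)) :=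
    fun i hi => by simp only [Finset.mem_filter] at hi ⊢; exact ⟨hi.1.1, hi.2⟩
  exact ⟨a, ha, by have := card_le_card hsub; omega⟩

theorem choose_card_load_le_card_isSwitch (y : Fin n → ℕ) (ha : a ∈ Ico 1 N) :
    (#{i | y i = a}).choose N ≤
      #{y' ∈ Finset.Nat.antidiagonalTuple n (∑ i, y i) | IsSwitch N y y'} := by
  rw [← card_powersetCard]
  refine card_le_card_of_surjOn (fun y' => ({i | y i ≠ y' i} : Finset (Fin n))) ?_
  intro s hs
  rw [Finset.mem_coe, Finset.mem_powersetCard] at hs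
  have hy : ∀ i ∈ s, y i = a := fun i hi => (Finset.mem_filter.1 (hs.1 hi)).2
  obtain ⟨t, hts, ht⟩ := s.exists_subset_card_eq (hs.2 ▸ (mem_Ico.1 ha).2.le)
  have hsw : IsSwitch N y (switch N y s t) := ⟨a, ha, s, t, hts, hs.2, ht, hy, rfl⟩
  refine ⟨switch N y s t, ?_, filter_ne_switch ha hts hy⟩
  rw [Finset.mem_coe, Finset.mem_filter, Finset.Nat.mem_antidiagonalTuple]
  exact ⟨hsw.sum_eq, hsw⟩

theorem card_isSwitch_le (A : Finset (Fin n → ℕ)) (hA : ∀ y ∈ A, boxCount y N < j)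
    (y' : Fin n → ℕ) : #{y ∈ A | IsSwitch N y y'} ≤ (j + N) * n.choose (N - 1) := by
  rcases Finset.eq_empty_or_nonempty {y ∈ A | IsSwitch N y y'} with h | ⟨y₀, hy₀⟩
  · simp [h]
  rw [Finset.mem_filter] at hy₀
  have hB : boxCount y' N ≤ j + N := by
    have := hy₀.2.boxCount_lt
    have := hA y₀ hy₀.1
    omega
  set P := ({i | y' i = N} : Finset (Fin n)) ×ˢ (univ : Finset (Fin n)).powersetCard (N - 1)
  calc #{y ∈ A | IsSwitch N y y'}
      ≤ #(P.image fun p => insert p.1 p.2) := by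
        refine card_le_card_of_injOn (fun y => ({i | y i ≠ y' i} : Finset (Fin n))) ?_
          ((IsSwitch.injOn_filter_ne y').mono fun y hy => (Finset.mem_filter.1 hy).2)
        intro y hy
        obtain ⟨a, ha, s, t, hts, hs, ht, hys, rfl⟩ := (Finset.mem_filter.1 hy).2
        obtain ⟨b, hb⟩ : t.Nonempty := card_pos.1 (ht ▸ (mem_Ico.1 ha).1)
        simp only [Finset.coe_image, Set.mem_image, Finset.mem_coe]
        rw [filter_ne_switch ha hts hys]
        refine ⟨(b, s.erase b), ?_, insert_erase (hts hb)⟩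
        simp [P, Finset.mem_product, switch, hb, card_erase_of_mem (hts hb), hs]
    _ ≤ #P := card_image_le
    _ = boxCount y' N * n.choose (N - 1) := by simp [P, boxCount]
    _ ≤ (j + N) * n.choose (N - 1) := Nat.mul_le_mul_right _ hB

end Allocations

theorem ballsProb_nonneg {w : ℕ → ℝ} (hw : ∀ k, 0 ≤ w k) (m n : ℕ) (A : Set (Fin n → ℕ)) :
    0 ≤ ballsProb w m n A :=
  div_nonneg (sum_nonneg fun _ _ => prod_nonneg fun _ _ => hw _)
    (sum_nonneg fun _ _ => prod_nonneg fun _ _ => hw _)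

theorem ballsProb_compl (w : ℕ → ℝ) {m n : ℕ} (hZ : Zball w m n ≠ 0) (A : Set (Fin n → ℕ)) :
    ballsProb w m n Aᶜ = 1 - ballsProb w m n A := by
  rw [eq_sub_iff_add_eq, ballsProb, ballsProb, ← add_div, div_eq_one_iff_eq hZ]
  simp only [Set.mem_compl_iff]
  rw [add_comm]
  exact sum_filter_add_sum_filter_not _ _ _

section Probability

variable {w : ℕ → ℝ} {N : ℕ}

theorem choose_le_card_isSwitch {n j : ℕ} {y : Fin n → ℕ} (hN : 1 ≤ N) (hy : ∀ i, y i ≤ N)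
    (hj : boxCount y N < j) :
    ((∑ i, y i) / (N * N) - j).choose N ≤
      #{y' ∈ Finset.Nat.antidiagonalTuple n (∑ i, y i) | IsSwitch N y y'} := by
  rcases Nat.eq_zero_or_pos ((∑ i, y i) / (N * N) - j) with h | h
  · rw [h, Nat.choose_eq_zero_of_lt hN]
    exact Nat.zero_le _
  obtain ⟨a, ha, hle⟩ := exists_le_card_load hy hj h
  exact (Nat.choose_le_choose N hle).trans (choose_card_load_le_card_isSwitch y ha)

theorem choose_mul_ballsProb_le (hw : ∀ k, 0 ≤ w k) (h0 : 0 < w 0) (hN : 1 ≤ N)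
    (hNpos : 0 < w N) (hNmax : ∀ k, 0 < w k → k ≤ N) {m n : ℕ} (j : ℕ) (hZ : 0 < Zball w m n) :
    ((m / (N * N) - j).choose N : ℝ) * ballsProb w m n {y | boxCount y N < j} ≤
      switchRatio w N * ((j + N) * n.choose (N - 1)) := by
  set T := Finset.Nat.antidiagonalTuple n m
  set bad := {y ∈ T | boxCount y N < j ∧ ∀ i, y i ≤ N}
  have hmass : ∑ y ∈ T with boxCount y N < j, ∏ i, w (y i) = ∑ y ∈ bad, ∏ i, w (y i) := by
    rw [← sum_filter_of_ne (p := fun y => ∀ i, y i ≤ N), Finset.filter_filter]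
    intro y _ hy i
    exact hNmax _ ((hw _).lt_of_ne' fun h => hy (prod_eq_zero (mem_univ i) h))
  have hbound := mul_sum_le_mul_mul_sum_of_bipartite (fun y y' => IsSwitch N y y') (s := bad)
    (t := T)
    (M := ((m / (N * N) - j).choose N : ℝ)) (K := ((j + N) * n.choose (N - 1) : ℕ))
    (fun y _ => prod_nonneg fun i _ => hw _) (fun y _ => prod_nonneg fun i _ => hw _)
    (switchRatio_nonneg hw N) ?_ ?_ fun y _ y' _ h => h.prod_le hw h0 hNpos
  · simp only [ballsProb, Set.mem_ofPred_eq]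
    rw [hmass, mul_div_assoc', div_le_iff₀ hZ]
    exact_mod_cast hbound
  · intro y hy
    obtain ⟨hyT, hj, hyN⟩ := Finset.mem_filter.1 hy
    rw [Finset.Nat.mem_antidiagonalTuple] at hyT
    have := choose_le_card_isSwitch hN hyN hj
    rw [hyT] at this
    exact_mod_cast this
  · intro y' _
    exact_mod_cast card_isSwitch_le bad (fun y hy => (Finset.mem_filter.1 hy).2.1) y'

end Probability

section Asymptotics

theorem eventually_mul_add_le_div_sub {u : ℕ → ℕ} {lam : ℝ}
    (hu : Tendsto (fun n => (u n : ℝ) / n) atTop (𝓝 lam)) (hlam : 0 < lam) {d : ℕ} (hd : 0 < d)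
    (j c : ℕ) : ∀ᶠ n in atTop, lam / (4 * d) * n + c ≤ ((u n / d - j : ℕ) : ℝ) := by
  have hq : 0 < lam / (4 * d) := by positivity
  filter_upwards [hu.eventually (lt_mem_nhds (half_lt_self hlam)), eventually_gt_atTop 0,
    ((tendsto_natCast_atTop_atTop (R := ℝ)).const_mul_atTop hq).eventually_ge_atTop
      ((c + j + 1 : ℕ) : ℝ)] with n hun hn he
  set e := lam / (4 * d) * n
  have hd' : (0 : ℝ) < d := by exact_mod_cast hd
  have hlt : 2 * e * d < ((u n / d : ℕ) + 1) * d := by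
    have h₁ : lam / 2 * n < u n := (lt_div_iff₀ (by exact_mod_cast hn)).1 hun
    have h₂ : (u n : ℝ) < d * ((u n / d : ℕ) + 1) := by
      exact_mod_cast Nat.lt_mul_div_succ (u n) hd
    have h₃ : 2 * e * d = lam / 2 * n := by simp only [e]; field_simp; ring
    linarith
  have hX := lt_of_mul_lt_mul_right hlt hd'.le
  push_cast at he
  have hj : j ≤ u n / d := by exact_mod_cast (show (j : ℝ) ≤ (u n / d : ℕ) by linarith)
  rw [Nat.cast_sub hj]
  linarith

theorem tendsto_choose_div_choose_succ {x : ℕ → ℕ} {q : ℝ} (hq : 0 < q) (k : ℕ)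
    (hx : ∀ᶠ n in atTop, q * n + k ≤ x n) :
    Tendsto (fun n => (n.choose k : ℝ) / (x n).choose (k + 1)) atTop (𝓝 0) := by
  refine squeeze_zero' (Eventually.of_forall fun n => by positivity)
    ?_ (tendsto_const_div_atTop_nhds_zero_nat ((k + 1).factorial / q ^ (k + 1)))
  filter_upwards [hx, eventually_gt_atTop 0] with n hxn hn
  have hn' : (0 : ℝ) < n := by exact_mod_cast hn
  have hx' : q * n ≤ ((x n + 1 - (k + 1) : ℕ) : ℝ) := by
    rw [Nat.cast_sub (by exact_mod_cast (show ((k : ℝ) + 1 ≤ x n + 1) by nlinarith))]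
    push_cast
    linarith
  calc (n.choose k : ℝ) / (x n).choose (k + 1)
      ≤ (n : ℝ) ^ k / ((q * n) ^ (k + 1) / (k + 1).factorial) := by
        refine div_le_div₀ (by positivity) (by exact_mod_cast Nat.choose_le_pow n k)
          (by positivity) ((div_le_div_of_nonneg_right ?_ (by positivity)).trans
            (Nat.pow_le_choose (k + 1) (x n)))
        exact pow_le_pow_left₀ (by positivity) hx' _
    _ = (k + 1).factorial / q ^ (k + 1) / n := by
        field_simp
        ring

end Asymptotics

theorem tendsto_ballsProb_boxCount_lt {w : ℕ → ℝ} (hw : ∀ k, 0 ≤ w k) (h0 : 0 < w 0) {N : ℕ}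
    (hN : 1 ≤ N) (hNpos : 0 < w N) (hNmax : ∀ k, 0 < w k → k ≤ N) {lam : ℝ} (hlam : 0 < lam)
    {m : ℕ → ℕ} (hm : Tendsto (fun n : ℕ => (m n : ℝ) / n) atTop (𝓝 lam)) (j : ℕ) :
    Tendsto (fun n => ballsProb w (m n) n {y | boxCount y N < j})
      (atTop ⊓ 𝓟 {n | 0 < Zball w (m n) n}) (𝓝 0) := by
  have hx := eventually_mul_add_le_div_sub hm hlam (d := N * N) (by positivity) j (N - 1)
  have hq : 0 < lam / (4 * (N * N : ℕ)) := by positivity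
  have hratio := tendsto_choose_div_choose_succ hq (N - 1) hx
  rw [Nat.sub_add_cancel hN] at hratio
  have hpos : ∀ᶠ n in atTop, 0 < (m n / (N * N) - j).choose N := by
    filter_upwards [hx, eventually_gt_atTop 0] with n hxn hn
    have hqn : 0 < lam / (4 * (N * N : ℕ)) * n := by positivity
    have := Nat.cast_lt.1 (show ((N - 1 : ℕ) : ℝ) < (m n / (N * N) - j : ℕ) by linarith)
    exact Nat.choose_pos (by omega)
  have hC := (hratio.const_mul (switchRatio w N * (j + N))).mono_left
    (inf_le_left (b := 𝓟 {n | 0 < Zball w (m n) n}))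
  rw [mul_zero] at hC
  refine squeeze_zero' (Eventually.of_forall fun n => ballsProb_nonneg hw _ _ _) ?_ hC
  rw [eventually_inf_principal]
  filter_upwards [hpos] with n hMn hZ
  rw [mul_div_assoc', le_div_iff₀ (by exact_mod_cast hMn)]
  linarith [choose_mul_ballsProb_le hw h0 hN hNpos hNmax j hZ]

/-- Theorem 19.1 of Janson: if `w_0 > 0` and `ω = N` with `1 ≤ N < ∞`, and
`m(n)/n → λ > 0`, then for every fixed `j ≥ 1`, with probability tending to `1` at
least `j` of the boxes of `B_{m(n),n}` contain exactly `N = ω` balls; in particular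
the `j`-th largest box load equals `ω` w.h.p. -/
theorem max_load_bounded_support (w : ℕ → ℝ) (hw : ∀ k, 0 ≤ w k) (h0 : 0 < w 0)
    (N : ℕ) (hN1 : 1 ≤ N) (hNpos : 0 < w N) (hNmax : ∀ k, 0 < w k → k ≤ N)
    (lam : ℝ) (hlam : 0 < lam)
    (m : ℕ → ℕ) (hm : Tendsto (fun n : ℕ => (m n : ℝ) / n) atTop (𝓝 lam)) :
    ∀ j : ℕ, 1 ≤ j →
      Tendsto (fun n : ℕ => ballsProb w (m n) n {y : Fin n → ℕ | j ≤ boxCount y N})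
        (atTop ⊓ Filter.principal {n : ℕ | 0 < Zball w (m n) n}) (𝓝 1) := by
  intro j _
  have hfew := tendsto_ballsProb_boxCount_lt hw h0 hN1 hNpos hNmax hlam hm j
  have hcompl : ∀ᶠ n in atTop ⊓ 𝓟 {n | 0 < Zball w (m n) n},
      1 - ballsProb w (m n) n {y | boxCount y N < j} =
        ballsProb w (m n) n {y : Fin n → ℕ | j ≤ boxCount y N} := by
    rw [eventually_inf_principal]
    refine Eventually.of_forall fun n hZ => ?_
    rw [← ballsProb_compl w (ne_of_gt hZ)]
    congr 1
    ext y
    simp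
  simpa using (hfew.const_sub 1).congr' hcompl
end
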